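/- arXiv:1902.01303 — 2 statements merged into one kernel-verified Lean document; each statement's English description precedes it below -/
import Mathlib

section
/- Let g, h ∈ GL(d,ℝ) and p ∈ {1,…,d−1}. Suppose that g, h and gh all have a gap of index p. Then d(U_p(gh), U_p(g)) ≤ ‖h‖·‖h⁻¹‖·σ_{p+1}(g)/σ_p(g). -/
noncomputable section

open scoped Matrix RealInnerProductSpace
open Filter Topology

namespace Paper

abbrev Euc (d : ℕ) : Type := EuclideanSpace ℝ (Fin d)

/-- The action of a `d × d` real matrix on Euclidean space. -/
def act {d : ℕ} (g : Matrix (Fin d) (Fin d) ℝ) (v : Euc d) : Euc d :=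
  Matrix.toEuclideanCLM (𝕜 := ℝ) g v

/-- The operator norm of a matrix acting on Euclidean space. -/
def opNorm {d : ℕ} (g : Matrix (Fin d) (Fin d) ℝ) : ℝ :=
  ‖(Matrix.toEuclideanCLM (𝕜 := ℝ) g : Euc d →L[ℝ] Euc d)‖

/-- The underlying matrix of an element of `GL (Fin d) ℝ`. -/
def mat {d : ℕ} (g : GL (Fin d) ℝ) : Matrix (Fin d) (Fin d) ℝ := ↑g

/-- The `p`-th singular value (`1`-indexed), via the min-max characterization:
`σ_p(g)` is the largest, over `p`-dimensional subspaces `P`, of the minimal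
stretch of unit vectors of `P`. -/
def sv {d : ℕ} (g : Matrix (Fin d) (Fin d) ℝ) (p : ℕ) : ℝ :=
  sSup { r | ∃ P : Submodule ℝ (Euc d), Module.finrank ℝ P = p ∧
      r = sInf { t | ∃ v ∈ P, ‖v‖ = 1 ∧ t = ‖act g v‖ } }

/-- `g` has a gap of index `p` if `σ_p(g) > σ_{p+1}(g)`. -/
def HasGap {d : ℕ} (g : Matrix (Fin d) (Fin d) ℝ) (p : ℕ) : Prop :=
  sv g (p + 1) < sv g p

/-- `U` is a Cartan attractor of index `p` for `g`: for some singular value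
decomposition `g = k·a·l` (`k`, `l` orthogonal, `a` diagonal with decreasing
nonnegative entries), `U` is the span of the first `p` columns of `k`. -/
def IsCartanAttractor {d : ℕ} (g : Matrix (Fin d) (Fin d) ℝ) (p : ℕ)
    (U : Submodule ℝ (Euc d)) : Prop :=
  ∃ k l : Matrix (Fin d) (Fin d) ℝ, ∃ σ : Fin d → ℝ,
    k ∈ Matrix.unitaryGroup (Fin d) ℝ ∧ l ∈ Matrix.unitaryGroup (Fin d) ℝ ∧
    (∀ i j : Fin d, i ≤ j → σ j ≤ σ i) ∧ (∀ i, 0 ≤ σ i) ∧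
    g = k * Matrix.diagonal σ * l ∧
    U = Submodule.span ℝ { x : Euc d | ∃ i : Fin d, (i : ℕ) < p ∧
          x = (EuclideanSpace.equiv (Fin d) ℝ).symm (fun j => k j i) }

/-- The Cartan attractor `U_p(g)`; when `g` has a gap of index `p` it is the
unique subspace satisfying `IsCartanAttractor g p`. -/
def cartanAttractor {d : ℕ} (g : Matrix (Fin d) (Fin d) ℝ) (p : ℕ) :
    Submodule ℝ (Euc d) :=
  letI := Classical.propDecidable (∃ U, IsCartanAttractor g p U)
  if h : ∃ U, IsCartanAttractor g p U then h.choose else ⊥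

/-- The angle `∠(P,Q)` between two subspaces: the infimum of angles between
nonzero vectors of `P` and `Q`. -/
def subAngle {d : ℕ} (P Q : Submodule ℝ (Euc d)) : ℝ :=
  sInf { θ | ∃ v ∈ P, v ≠ 0 ∧ ∃ w ∈ Q, w ≠ 0 ∧ θ = InnerProductGeometry.angle v w }

/-- `sin ∠(v,w)`. -/
def sinAngle {d : ℕ} (v w : Euc d) : ℝ := Real.sin (InnerProductGeometry.angle v w)

/-- The distance `d(P,Q) = max_{v ∈ P∖{0}} min_{w ∈ Q∖{0}} sin ∠(v,w)`. -/
def grassDist {d : ℕ} (P Q : Submodule ℝ (Euc d)) : ℝ :=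
  sSup { r | ∃ v ∈ P, v ≠ 0 ∧
      r = sInf { s | ∃ w ∈ Q, w ≠ 0 ∧ s = sinAngle v w } }

/-- The image `g·P` of a subspace under a matrix. -/
def mapMat {d : ℕ} (g : Matrix (Fin d) (Fin d) ℝ) (P : Submodule ℝ (Euc d)) :
    Submodule ℝ (Euc d) :=
  P.map ((Matrix.toEuclideanCLM (𝕜 := ℝ) g : Euc d →L[ℝ] Euc d) : Euc d →ₗ[ℝ] Euc d)

/-- `m(g|_W)`, the minimal stretch of unit vectors of `W` under `g`. -/
def minRestrict {d : ℕ} (g : Matrix (Fin d) (Fin d) ℝ) (W : Submodule ℝ (Euc d)) : ℝ :=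
  sInf { t | ∃ v ∈ W, ‖v‖ = 1 ∧ t = ‖act g v‖ }

/-- `‖g|_W‖`, the maximal stretch of unit vectors of `W` under `g`. -/
def normRestrict {d : ℕ} (g : Matrix (Fin d) (Fin d) ℝ) (W : Submodule ℝ (Euc d)) : ℝ :=
  sSup { t | ∃ v ∈ W, ‖v‖ = 1 ∧ t = ‖act g v‖ }

/-!
Write `gh = k' a' l'` and `g = k a l` as singular value decompositions. A unit vector
`v ∈ U_p(gh)` is `v = gh u` with `σ_p(gh) ‖u‖ ≤ 1`, and `σ_p(g) = σ_p(gh · h⁻¹) ≤ σ_p(gh) ‖h⁻¹‖`.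
Keeping only the first `p` coordinates of `a l (h u)` gives a vector `x = k a (⋯) ∈ U_p(g)` with
`‖v - x‖ = ‖g (h u) - x‖ ≤ σ_{p+1}(g) ‖h u‖ ≤ ‖h‖ ‖h⁻¹‖ σ_{p+1}(g) / σ_p(g)`,
and `sin ∠(v, x) ≤ ‖v - x‖` for a unit vector `v`.
-/

section Action

variable {d : ℕ}

lemma act_apply (g : Matrix (Fin d) (Fin d) ℝ) (v : Euc d) (j : Fin d) :
    act g v j = ∑ i, g j i * v i := rfl

@[simp] lemma act_one (v : Euc d) : act 1 v = v := by simp [act]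

lemma act_mul (A B : Matrix (Fin d) (Fin d) ℝ) (v : Euc d) :
    act (A * B) v = act A (act B v) := by simp [act]

@[simp] lemma act_zero (A : Matrix (Fin d) (Fin d) ℝ) : act A 0 = 0 := by simp [act]

@[simp] lemma act_add (A : Matrix (Fin d) (Fin d) ℝ) (v w : Euc d) :
    act A (v + w) = act A v + act A w := by simp [act]

@[simp] lemma act_sub (A : Matrix (Fin d) (Fin d) ℝ) (v w : Euc d) :
    act A (v - w) = act A v - act A w := by simp [act]

@[simp] lemma act_smul (A : Matrix (Fin d) (Fin d) ℝ) (c : ℝ) (v : Euc d) :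
    act A (c • v) = c • act A v := by simp [act]

lemma act_sum (A : Matrix (Fin d) (Fin d) ℝ) {ι : Type*} (s : Finset ι) (f : ι → Euc d) :
    act A (∑ i ∈ s, f i) = ∑ i ∈ s, act A (f i) :=
  map_sum (Matrix.toEuclideanCLM (𝕜 := ℝ) A) f s

lemma act_diagonal_apply (σ : Fin d → ℝ) (v : Euc d) (j : Fin d) :
    act (Matrix.diagonal σ) v j = σ j * v j := by
  simp [act_apply, Matrix.diagonal_apply]

lemma norm_act_le (A : Matrix (Fin d) (Fin d) ℝ) (v : Euc d) :
    ‖act A v‖ ≤ opNorm A * ‖v‖ :=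
  (Matrix.toEuclideanCLM (𝕜 := ℝ) A).le_opNorm v

lemma opNorm_nonneg (A : Matrix (Fin d) (Fin d) ℝ) : 0 ≤ opNorm A := norm_nonneg _

lemma inner_act_left (A : Matrix (Fin d) (Fin d) ℝ) (v w : Euc d) :
    ⟪act A v, w⟫ = ⟪v, act (star A) w⟫ := by
  simp only [act, map_star]
  rw [ContinuousLinearMap.star_eq_adjoint, ContinuousLinearMap.adjoint_inner_right]

section Unitary

variable {k : Matrix (Fin d) (Fin d) ℝ}

lemma act_star_act_of_mem_unitaryGroup (hk : k ∈ Matrix.unitaryGroup (Fin d) ℝ)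
    (v : Euc d) : act (star k) (act k v) = v := by
  rw [← act_mul, Matrix.mem_unitaryGroup_iff'.mp hk, act_one]

lemma act_act_star_of_mem_unitaryGroup (hk : k ∈ Matrix.unitaryGroup (Fin d) ℝ)
    (v : Euc d) : act k (act (star k) v) = v := by
  rw [← act_mul, Matrix.mem_unitaryGroup_iff.mp hk, act_one]

lemma inner_act_act_of_mem_unitaryGroup (hk : k ∈ Matrix.unitaryGroup (Fin d) ℝ)
    (v w : Euc d) : ⟪act k v, act k w⟫ = ⟪v, w⟫ := by
  rw [inner_act_left, act_star_act_of_mem_unitaryGroup hk]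

lemma norm_act_of_mem_unitaryGroup (hk : k ∈ Matrix.unitaryGroup (Fin d) ℝ)
    (v : Euc d) : ‖act k v‖ = ‖v‖ := by
  rw [norm_eq_sqrt_real_inner, inner_act_act_of_mem_unitaryGroup hk, ← norm_eq_sqrt_real_inner]

end Unitary

lemma norm_le_norm_of_forall_abs_le {x y : Euc d} (h : ∀ j, |x j| ≤ |y j|) : ‖x‖ ≤ ‖y‖ := by
  refine le_of_sq_le_sq ?_ (norm_nonneg y)
  simp only [EuclideanSpace.real_norm_sq_eq]
  exact Finset.sum_le_sum fun j _ => sq_le_sq.mpr (h j)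

section Diagonal

variable {τ : Fin d → ℝ} {t : Euc d} {c : ℝ}

lemma norm_act_diagonal_le (hc : 0 ≤ c) (h : ∀ j, t j ≠ 0 → |τ j| ≤ c) :
    ‖act (Matrix.diagonal τ) t‖ ≤ c * ‖t‖ := by
  rw [← abs_of_nonneg hc, ← Real.norm_eq_abs, ← norm_smul]
  refine norm_le_norm_of_forall_abs_le fun j => ?_
  rw [act_diagonal_apply, PiLp.smul_apply, smul_eq_mul, abs_mul, abs_mul, abs_of_nonneg hc]
  by_cases hj : t j = 0
  · simp [hj]
  · exact mul_le_mul_of_nonneg_right (h j hj) (abs_nonneg _)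

lemma le_norm_act_diagonal (hc : 0 ≤ c) (h : ∀ j, t j ≠ 0 → c ≤ |τ j|) :
    c * ‖t‖ ≤ ‖act (Matrix.diagonal τ) t‖ := by
  rw [← abs_of_nonneg hc, ← Real.norm_eq_abs, ← norm_smul]
  refine norm_le_norm_of_forall_abs_le fun j => ?_
  rw [act_diagonal_apply, PiLp.smul_apply, smul_eq_mul, abs_mul, abs_mul, abs_of_nonneg hc]
  by_cases hj : t j = 0
  · simp [hj]
  · exact mul_le_mul_of_nonneg_right (h j hj) (abs_nonneg _)

end Diagonal

end Action

section Columns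

variable {d : ℕ}

def col (k : Matrix (Fin d) (Fin d) ℝ) (i : Fin d) : Euc d :=
  (EuclideanSpace.equiv (Fin d) ℝ).symm (fun j => k j i)

def colSpan (k : Matrix (Fin d) (Fin d) ℝ) (s : Set (Fin d)) : Submodule ℝ (Euc d) :=
  Submodule.span ℝ (col k '' s)

lemma act_single (k : Matrix (Fin d) (Fin d) ℝ) (i : Fin d) :
    act k (EuclideanSpace.single i 1) = col k i := by
  ext j; simp [act_apply, col]

lemma col_mul (A B : Matrix (Fin d) (Fin d) ℝ) (i : Fin d) :
    col (A * B) i = act A (col B i) := by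
  ext j; simp [col, act_apply, Matrix.mul_apply]

lemma col_mul_diagonal (A : Matrix (Fin d) (Fin d) ℝ) (σ : Fin d → ℝ) (i : Fin d) :
    col (A * Matrix.diagonal σ) i = σ i • col A i := by
  ext j; simp [col, mul_comm]

lemma col_of (f : Fin d → Euc d) : col (Matrix.of fun j i => f i j) = f := rfl

lemma mem_unitaryGroup_iff_orthonormal_col {k : Matrix (Fin d) (Fin d) ℝ} :
    k ∈ Matrix.unitaryGroup (Fin d) ℝ ↔ Orthonormal ℝ (col k) := by
  rw [Matrix.mem_unitaryGroup_iff', orthonormal_iff_ite, ← Matrix.ext_iff]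
  refine forall₂_congr fun i j => ?_
  simp [Matrix.mul_apply, col, PiLp.inner_apply, Matrix.one_apply, mul_comm]

lemma finrank_colSpan {k : Matrix (Fin d) (Fin d) ℝ}
    (hk : k ∈ Matrix.unitaryGroup (Fin d) ℝ) (s : Finset (Fin d)) :
    Module.finrank ℝ (colSpan k s) = s.card := by
  rw [colSpan, Set.image_eq_range]
  have hind := (mem_unitaryGroup_iff_orthonormal_col.mp hk).linearIndependent
  exact (finrank_span_eq_card (hind.comp _ Subtype.val_injective)).trans (by simp)

lemma mem_colSpan_iff {k : Matrix (Fin d) (Fin d) ℝ}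
    (hk : k ∈ Matrix.unitaryGroup (Fin d) ℝ) (s : Set (Fin d)) (v : Euc d) :
    v ∈ colSpan k s ↔ ∀ j ∉ s, act (star k) v j = 0 := by
  constructor
  · intro hv
    induction hv using Submodule.span_induction with
    | mem x hx =>
      obtain ⟨i, hi, rfl⟩ := hx
      intro j hj
      rw [← act_single, act_star_act_of_mem_unitaryGroup hk, PiLp.single_apply,
        if_neg (by rintro rfl; exact hj hi)]
    | zero => simp
    | add x y _ _ hx hy => intro j hj; simp [hx j hj, hy j hj]
    | smul a x _ hx => intro j hj; simp [hx j hj]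
  · intro hv
    rw [← act_act_star_of_mem_unitaryGroup hk v,
      ← (EuclideanSpace.basisFun (Fin d) ℝ).sum_repr (act (star k) v), act_sum]
    refine Submodule.sum_mem _ fun j _ => ?_
    by_cases hj : j ∈ s
    · rw [act_smul, EuclideanSpace.basisFun_apply, act_single]
      exact Submodule.smul_mem _ _ (Submodule.subset_span ⟨j, hj, rfl⟩)
    · simp [hv j hj]

lemma colSpan_ne_bot {k : Matrix (Fin d) (Fin d) ℝ} (hk : k ∈ Matrix.unitaryGroup (Fin d) ℝ)
    {s : Set (Fin d)} {i : Fin d} (hi : i ∈ s) : colSpan k s ≠ ⊥ :=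
  (Submodule.ne_bot_iff _).mpr ⟨col k i, Submodule.subset_span ⟨i, hi, rfl⟩,
    (mem_unitaryGroup_iff_orthonormal_col.mp hk).ne_zero i⟩

end Columns

section SVD

variable {d : ℕ}

lemma act_injective_of_isUnit_det {m : Matrix (Fin d) (Fin d) ℝ} (hm : IsUnit m.det) :
    Function.Injective (act m) := fun v w hvw => by
  rw [← act_one v, ← act_one w, ← Matrix.nonsing_inv_mul m hm, act_mul, act_mul, hvw]

structure IsSVD (m k l : Matrix (Fin d) (Fin d) ℝ) (σ : Fin d → ℝ) : Prop where
  left_mem : k ∈ Matrix.unitaryGroup (Fin d) ℝ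
  right_mem : l ∈ Matrix.unitaryGroup (Fin d) ℝ
  antitone : Antitone σ
  nonneg : ∀ i, 0 ≤ σ i
  eq : m = k * Matrix.diagonal σ * l

/-- The right singular vectors are an eigenbasis `e` of `mᵀ m`, with eigenvalues in decreasing
order, and the left singular vectors are the normalised images `m e i`. -/
theorem exists_isSVD_of_isUnit_det {m : Matrix (Fin d) (Fin d) ℝ} (hm : IsUnit m.det) :
    ∃ k l σ, IsSVD m k l σ := by
  have hT : (Matrix.toEuclideanCLM (𝕜 := ℝ) (mᴴ * m) : Euc d →ₗ[ℝ] Euc d).IsSymmetric := by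
    intro v w
    change ⟪act (mᴴ * m) v, w⟫ = ⟪v, act (mᴴ * m) w⟫
    rw [inner_act_left, Matrix.star_eq_conjTranspose, Matrix.conjTranspose_mul,
      Matrix.conjTranspose_conjTranspose]
  set e := hT.eigenvectorBasis finrank_euclideanSpace_fin
  set μ := hT.eigenvalues finrank_euclideanSpace_fin
  have inner_act_e (i j : Fin d) : ⟪act m (e i), act m (e j)⟫ = μ j * ⟪e i, e j⟫ := by
    have hμ := hT.apply_eigenvectorBasis finrank_euclideanSpace_fin j
    rw [inner_act_left, ← act_mul, Matrix.star_eq_conjTranspose]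
    change ⟪e i, (Matrix.toEuclideanCLM (𝕜 := ℝ) (mᴴ * m) : Euc d →ₗ[ℝ] Euc d) (e j)⟫ = _
    rw [hμ, real_inner_smul_right]
    rfl
  set σ : Fin d → ℝ := fun i => ‖act m (e i)‖
  have hσ_sq (i : Fin d) : σ i ^ 2 = μ i := by
    have h := inner_act_e i i
    rwa [real_inner_self_eq_norm_sq, real_inner_self_eq_norm_sq, e.orthonormal.1 i, one_pow,
      mul_one] at h
  have hσ_pos (i : Fin d) : 0 < σ i :=
    norm_pos_iff.mpr fun h0 => e.orthonormal.ne_zero i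
      (act_injective_of_isUnit_det hm (h0.trans (act_zero m).symm))
  set k : Matrix (Fin d) (Fin d) ℝ := Matrix.of fun j i => ((σ i)⁻¹ • act m (e i)) j
  set W : Matrix (Fin d) (Fin d) ℝ := Matrix.of fun j i => e i j
  have hW : W ∈ Matrix.unitaryGroup (Fin d) ℝ := by
    rw [mem_unitaryGroup_iff_orthonormal_col, col_of]
    exact e.orthonormal
  have hk : k ∈ Matrix.unitaryGroup (Fin d) ℝ := by
    rw [mem_unitaryGroup_iff_orthonormal_col, col_of]
    refine ⟨fun i => norm_smul_inv_norm (norm_pos_iff.mp (hσ_pos i)), fun i j hij => ?_⟩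
    dsimp only
    rw [real_inner_smul_left, real_inner_smul_right, inner_act_e, e.orthonormal.2 hij]
    simp
  refine ⟨k, star W, σ, hk, Unitary.star_mem hW, fun i j hij => ?_, fun i => (hσ_pos i).le, ?_⟩
  · rw [← sq_le_sq₀ (hσ_pos j).le (hσ_pos i).le, hσ_sq, hσ_sq]
    exact hT.eigenvalues_antitone finrank_euclideanSpace_fin hij
  · have hmW : m * W = k * Matrix.diagonal σ := by
      ext j i
      change col (m * W) i j = col (k * Matrix.diagonal σ) i j
      rw [col_mul, col_mul_diagonal, col_of, col_of, smul_inv_smul₀ (hσ_pos i).ne']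
    rw [← hmW, Matrix.mul_assoc, Matrix.mem_unitaryGroup_iff.mp hW, Matrix.mul_one]

namespace IsSVD

variable {m k l : Matrix (Fin d) (Fin d) ℝ} {σ : Fin d → ℝ}

lemma pos_of_isUnit_det (hs : IsSVD m k l σ) (hm : IsUnit m.det) (i : Fin d) : 0 < σ i := by
  refine (hs.nonneg i).lt_of_ne fun h0 => hm.ne_zero ?_
  rw [hs.eq, Matrix.det_mul, Matrix.det_mul, Matrix.det_diagonal,
    Finset.prod_eq_zero (Finset.mem_univ i) h0.symm, mul_zero, zero_mul]

lemma norm_act (hs : IsSVD m k l σ) (v : Euc d) :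
    ‖act m v‖ = ‖act (Matrix.diagonal σ) (act l v)‖ := by
  rw [hs.eq, act_mul, act_mul, norm_act_of_mem_unitaryGroup hs.left_mem]

lemma mem_colSpan_star_right (hs : IsSVD m k l σ) {s : Set (Fin d)} {v : Euc d} :
    v ∈ colSpan (star l) s ↔ ∀ j ∉ s, act l v j = 0 := by
  rw [mem_colSpan_iff (Unitary.star_mem hs.right_mem), star_star]

lemma norm_act_le_of_mem_colSpan (hs : IsSVD m k l σ) {s : Set (Fin d)} {c : ℝ} (hc : 0 ≤ c)
    (hσ : ∀ j ∈ s, σ j ≤ c) {v : Euc d} (hv : v ∈ colSpan (star l) s) :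
    ‖act m v‖ ≤ c * ‖v‖ := by
  rw [hs.norm_act, ← norm_act_of_mem_unitaryGroup hs.right_mem v]
  refine norm_act_diagonal_le hc fun j hj => ?_
  rw [abs_of_nonneg (hs.nonneg j)]
  exact hσ j (not_not.mp fun hjs => hj (hs.mem_colSpan_star_right.mp hv j hjs))

lemma le_norm_act_of_mem_colSpan (hs : IsSVD m k l σ) {s : Set (Fin d)} {c : ℝ} (hc : 0 ≤ c)
    (hσ : ∀ j ∈ s, c ≤ σ j) {v : Euc d} (hv : v ∈ colSpan (star l) s) :
    c * ‖v‖ ≤ ‖act m v‖ := by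
  rw [hs.norm_act, ← norm_act_of_mem_unitaryGroup hs.right_mem v]
  refine le_norm_act_diagonal hc fun j hj => ?_
  rw [abs_of_nonneg (hs.nonneg j)]
  exact hσ j (not_not.mp fun hjs => hj (hs.mem_colSpan_star_right.mp hv j hjs))

lemma exists_act_eq (hs : IsSVD m k l σ) {s : Set (Fin d)} {c : ℝ} (hc : 0 < c)
    (hσ : ∀ j ∈ s, c ≤ σ j) {v : Euc d} (hv : v ∈ colSpan k s) :
    ∃ u, act m u = v ∧ c * ‖u‖ ≤ ‖v‖ := by
  have hvs := (mem_colSpan_iff hs.left_mem s v).mp hv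
  set x := act (Matrix.diagonal σ⁻¹) (act (star k) v)
  have hσx : act (Matrix.diagonal σ) x = act (star k) v := by
    ext j
    rw [act_diagonal_apply, act_diagonal_apply, Pi.inv_apply, ← mul_assoc]
    by_cases hj : j ∈ s
    · rw [mul_inv_cancel₀ (hc.trans_le (hσ j hj)).ne', one_mul]
    · rw [hvs j hj, mul_zero]
  have hmx : act m (act (star l) x) = v := by
    rw [hs.eq, act_mul, act_mul, act_act_star_of_mem_unitaryGroup hs.right_mem, hσx,
      act_act_star_of_mem_unitaryGroup hs.left_mem]
  refine ⟨act (star l) x, hmx, hmx ▸ hs.le_norm_act_of_mem_colSpan hc.le hσ ?_⟩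
  rw [hs.mem_colSpan_star_right, act_act_star_of_mem_unitaryGroup hs.right_mem]
  intro j hj
  rw [act_diagonal_apply, hvs j hj, mul_zero]

lemma exists_norm_act_sub_le (hs : IsSVD m k l σ) (s : Set (Fin d)) {c : ℝ} (hc : 0 ≤ c)
    (hσ : ∀ j ∉ s, σ j ≤ c) (w : Euc d) :
    ∃ x ∈ colSpan k s, ‖act m w - x‖ ≤ c * ‖w‖ := by
  classical
  refine ⟨act k (act (Matrix.diagonal (s.indicator σ)) (act l w)), ?_, ?_⟩
  · rw [mem_colSpan_iff hs.left_mem, act_star_act_of_mem_unitaryGroup hs.left_mem]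
    intro j hj
    rw [act_diagonal_apply, Set.indicator_of_notMem hj, zero_mul]
  · rw [hs.eq, act_mul, act_mul, ← act_sub, norm_act_of_mem_unitaryGroup hs.left_mem,
      ← norm_act_of_mem_unitaryGroup hs.right_mem w, ← abs_of_nonneg hc, ← Real.norm_eq_abs,
      ← norm_smul]
    refine norm_le_norm_of_forall_abs_le fun j => ?_
    simp only [PiLp.sub_apply, PiLp.smul_apply, act_diagonal_apply, smul_eq_mul, ← sub_mul,
      abs_mul]
    by_cases hj : j ∈ s
    · rw [Set.indicator_of_mem hj, sub_self, abs_zero, zero_mul]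
      positivity
    · rw [Set.indicator_of_notMem hj, sub_zero, abs_of_nonneg (hs.nonneg j)]
      gcongr
      exact (hσ j hj).trans (le_abs_self c)

lemma exists_norm_sub_le_of_mem_colSpan_mul {G H k' l' : Matrix (Fin d) (Fin d) ℝ}
    {σ' : Fin d → ℝ} (hs : IsSVD G k l σ) (hs' : IsSVD (G * H) k' l' σ') (s : Set (Fin d))
    {a b : ℝ} (ha : 0 < a) (hb : 0 ≤ b) (hσ' : ∀ j ∈ s, a ≤ σ' j) (hσ : ∀ j ∉ s, σ j ≤ b)
    {v : Euc d} (hv : v ∈ colSpan k' s) :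
    ∃ x ∈ colSpan k s, a * ‖v - x‖ ≤ b * opNorm H * ‖v‖ := by
  obtain ⟨u, rfl, hu⟩ := hs'.exists_act_eq ha hσ' hv
  obtain ⟨x, hx, hux⟩ := hs.exists_norm_act_sub_le s hb hσ (act H u)
  refine ⟨x, hx, ?_⟩
  calc a * ‖act (G * H) u - x‖ ≤ a * (b * (opNorm H * ‖u‖)) := by
        rw [act_mul]
        gcongr
        exact hux.trans (by gcongr; exact norm_act_le H u)
    _ = b * opNorm H * (a * ‖u‖) := by ring
    _ ≤ b * opNorm H * ‖act (G * H) u‖ := by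
        gcongr
        exact mul_nonneg hb (opNorm_nonneg H)

end IsSVD

end SVD

section MinMax

variable {d : ℕ} {m : Matrix (Fin d) (Fin d) ℝ} {P : Submodule ℝ (Euc d)}

lemma exists_norm_eq_one_of_ne_bot (hP : P ≠ ⊥) : ∃ v ∈ P, ‖v‖ = 1 := by
  obtain ⟨x, hxP, hx⟩ := P.ne_bot_iff.mp hP
  exact ⟨‖x‖⁻¹ • x, P.smul_mem _ hxP, norm_smul_inv_norm hx⟩

lemma minRestrict_nonneg : 0 ≤ minRestrict m P :=
  Real.sInf_nonneg (by rintro t ⟨v, -, -, rfl⟩; exact norm_nonneg _)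

lemma minRestrict_le {v : Euc d} (hv : v ∈ P) (hv1 : ‖v‖ = 1) :
    minRestrict m P ≤ ‖act m v‖ :=
  csInf_le ⟨0, by rintro t ⟨w, -, -, rfl⟩; exact norm_nonneg _⟩ ⟨v, hv, hv1, rfl⟩

lemma le_minRestrict {b : ℝ} (hP : P ≠ ⊥) (h : ∀ v ∈ P, ‖v‖ = 1 → b ≤ ‖act m v‖) :
    b ≤ minRestrict m P := by
  obtain ⟨v, hvP, hv1⟩ := exists_norm_eq_one_of_ne_bot hP
  exact le_csInf ⟨_, v, hvP, hv1, rfl⟩ (by rintro t ⟨w, hw, hw1, rfl⟩; exact h w hw hw1)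

lemma minRestrict_bot : minRestrict m ⊥ = 0 := by
  have hempty : { t | ∃ v ∈ (⊥ : Submodule ℝ (Euc d)), ‖v‖ = 1 ∧ t = ‖act m v‖ } = ∅ := by
    refine Set.eq_empty_of_forall_notMem ?_
    rintro t ⟨v, hv, hv1, -⟩
    rw [Submodule.mem_bot] at hv
    simp [hv] at hv1
  rw [minRestrict, hempty, Real.sInf_empty]

lemma minRestrict_le_opNorm : minRestrict m P ≤ opNorm m := by
  by_cases hP : P = ⊥
  · rw [hP, minRestrict_bot]
    exact opNorm_nonneg m
  · obtain ⟨v, hvP, hv1⟩ := exists_norm_eq_one_of_ne_bot hP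
    simpa [hv1] using (minRestrict_le hvP hv1).trans (norm_act_le m v)

lemma minRestrict_le_sv {q : ℕ} (hP : Module.finrank ℝ P = q) : minRestrict m P ≤ sv m q :=
  le_csSup ⟨opNorm m, by rintro r ⟨Q, -, rfl⟩; exact minRestrict_le_opNorm⟩ ⟨P, hP, rfl⟩

lemma sv_le {q : ℕ} {b : ℝ} (hb : 0 ≤ b)
    (h : ∀ P : Submodule ℝ (Euc d), Module.finrank ℝ P = q → minRestrict m P ≤ b) :
    sv m q ≤ b :=
  Real.sSup_le (by rintro r ⟨P, hP, rfl⟩; exact h P hP) hb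

lemma sv_nonneg (q : ℕ) : 0 ≤ sv m q :=
  Real.sSup_nonneg (by rintro r ⟨P, -, rfl⟩; exact minRestrict_nonneg)

end MinMax

/-- Courant–Fischer min-max principle. -/
theorem IsSVD.sv_succ {d : ℕ} {m k l : Matrix (Fin d) (Fin d) ℝ} {σ : Fin d → ℝ}
    (hs : IsSVD m k l σ) (i : Fin d) : sv m (i + 1) = σ i := by
  have hl := Unitary.star_mem hs.right_mem
  refine le_antisymm (sv_le (hs.nonneg i) fun P hP => ?_) ?_
  · set W := colSpan (star l) (Finset.Ici i)
    have hW : Module.finrank ℝ W = d - i := by rw [finrank_colSpan hl, Fin.card_Ici]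
    have hPW : P ⊓ W ≠ ⊥ := by
      intro hbot
      have hsum := Submodule.finrank_sup_add_finrank_inf_eq P W
      have hsup := (Submodule.finrank_le (P ⊔ W)).trans_eq finrank_euclideanSpace_fin
      rw [hbot, finrank_bot, hP, hW] at hsum
      omega
    obtain ⟨v, ⟨hvP, hvW⟩, hv1⟩ := exists_norm_eq_one_of_ne_bot hPW
    calc minRestrict m P ≤ ‖act m v‖ := minRestrict_le hvP hv1
      _ ≤ σ i * ‖v‖ := hs.norm_act_le_of_mem_colSpan (hs.nonneg i)
          (fun j hj => hs.antitone (by simpa using hj)) hvW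
      _ = σ i := by rw [hv1, mul_one]
  · set P := colSpan (star l) (Finset.Iic i)
    have hP : Module.finrank ℝ P = i + 1 := by rw [finrank_colSpan hl, Fin.card_Iic]
    refine le_trans (le_minRestrict (fun hbot => ?_) fun v hv hv1 => ?_) (minRestrict_le_sv hP)
    · rw [hbot, finrank_bot] at hP
      omega
    · simpa [hv1] using
        hs.le_norm_act_of_mem_colSpan (hs.nonneg i) (fun j hj => hs.antitone (by simpa using hj)) hv

section Multiplication

variable {d : ℕ}

lemma finrank_mapMat_of_isUnit_det {N : Matrix (Fin d) (Fin d) ℝ} (hN : IsUnit N.det)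
    (P : Submodule ℝ (Euc d)) : Module.finrank ℝ (mapMat N P) = Module.finrank ℝ P :=
  (Submodule.equivMapOfInjective _ (act_injective_of_isUnit_det hN) P).finrank_eq.symm

lemma minRestrict_mul_le (M N : Matrix (Fin d) (Fin d) ℝ) {P : Submodule ℝ (Euc d)}
    (hQ : mapMat N P ≠ ⊥) :
    minRestrict (M * N) P ≤ minRestrict M (mapMat N P) * opNorm N := by
  obtain ⟨w₀, hw₀, hw₀1⟩ := exists_norm_eq_one_of_ne_bot hQ
  unfold minRestrict
  rw [mul_comm, ← smul_eq_mul (a := opNorm N), ← Real.sInf_smul_of_nonneg (opNorm_nonneg N)]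
  refine le_csInf ⟨_, _, ⟨w₀, hw₀, hw₀1, rfl⟩, rfl⟩ ?_
  rintro _ ⟨_, ⟨w, hw, hw1, rfl⟩, rfl⟩
  obtain ⟨z, hzP, rfl⟩ := Submodule.mem_map.mp hw
  have hz : 1 ≤ opNorm N * ‖z‖ := hw1 ▸ norm_act_le N z
  have hz0 : 0 < ‖z‖ := pos_of_mul_pos_right (one_pos.trans_le hz) (opNorm_nonneg N)
  calc minRestrict (M * N) P ≤ ‖act (M * N) (‖z‖⁻¹ • z)‖ :=
        minRestrict_le (P.smul_mem _ hzP) (norm_smul_inv_norm (norm_pos_iff.mp hz0))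
    _ = ‖z‖⁻¹ * ‖act M (act N z)‖ := by rw [act_smul, norm_smul, act_mul, norm_inv, norm_norm]
    _ ≤ opNorm N * ‖act M (act N z)‖ := by
        gcongr
        rwa [inv_le_iff_one_le_mul₀ hz0]

theorem sv_mul_le (M : Matrix (Fin d) (Fin d) ℝ) {N : Matrix (Fin d) (Fin d) ℝ}
    (hN : IsUnit N.det) (q : ℕ) : sv (M * N) q ≤ sv M q * opNorm N := by
  refine sv_le (mul_nonneg (sv_nonneg q) (opNorm_nonneg N)) fun P hP => ?_
  by_cases hQ : mapMat N P = ⊥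
  · have hP0 : P = ⊥ := by
      rw [← Submodule.finrank_eq_zero, ← finrank_mapMat_of_isUnit_det hN, hQ, finrank_bot]
    rw [hP0, minRestrict_bot]
    exact mul_nonneg (sv_nonneg q) (opNorm_nonneg N)
  · refine (minRestrict_mul_le M N hQ).trans (mul_le_mul_of_nonneg_right ?_ (opNorm_nonneg N))
    exact minRestrict_le_sv ((finrank_mapMat_of_isUnit_det hN P).trans hP)

end Multiplication

section Grassmannian

variable {d : ℕ}

lemma sinAngle_le_norm_sub {v x : Euc d} (hv : ‖v‖ = 1) (hx : x ≠ 0) :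
    sinAngle v x ≤ ‖v - x‖ := by
  have hx0 : 0 < ‖x‖ := norm_pos_iff.mpr hx
  have hsin := InnerProductGeometry.sin_angle_mul_norm_mul_norm v x
  rw [real_inner_self_eq_norm_sq, real_inner_self_eq_norm_sq, hv, one_mul, one_pow, one_mul]
    at hsin
  refine le_of_mul_le_mul_right ?_ hx0
  rw [sinAngle, hsin, Real.sqrt_le_left (by positivity), mul_pow, norm_sub_sq_real, hv]
  nlinarith [sq_nonneg (‖x‖ ^ 2 - ⟪v, x⟫)]

lemma grassDist_le {P Q : Submodule ℝ (Euc d)} {C : ℝ} (hQ : Q ≠ ⊥) (hC : 0 ≤ C)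
    (h : ∀ v ∈ P, ‖v‖ = 1 → ∃ x ∈ Q, ‖v - x‖ ≤ C) : grassDist P Q ≤ C := by
  refine Real.sSup_le ?_ hC
  rintro _ ⟨v, hvP, hv0, rfl⟩
  have hbdd : BddBelow {s | ∃ w ∈ Q, w ≠ 0 ∧ s = sinAngle v w} :=
    ⟨0, by rintro _ ⟨w, -, -, rfl⟩; exact InnerProductGeometry.sin_angle_nonneg v w⟩
  have hv1 : ‖‖v‖⁻¹ • v‖ = 1 := norm_smul_inv_norm hv0
  obtain ⟨x, hxQ, hx⟩ := h _ (P.smul_mem _ hvP) hv1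
  by_cases hx0 : x = 0
  · obtain ⟨w, hwQ, hw0⟩ := Q.ne_bot_iff.mp hQ
    refine (csInf_le hbdd ⟨w, hwQ, hw0, rfl⟩).trans ((Real.sin_le_one _).trans ?_)
    rwa [hx0, sub_zero, hv1] at hx
  · refine (csInf_le hbdd ⟨x, hxQ, hx0, rfl⟩).trans (le_trans ?_ hx)
    rw [sinAngle, ← InnerProductGeometry.angle_smul_left_of_pos v x
      (inv_pos.mpr (norm_pos_iff.mpr hv0))]
    exact sinAngle_le_norm_sub hv1 hx0

end Grassmannian

section CartanAttractor

variable {d : ℕ} {m : Matrix (Fin d) (Fin d) ℝ}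

lemma isCartanAttractor_iff {p : ℕ} {U : Submodule ℝ (Euc d)} :
    IsCartanAttractor m p U ↔ ∃ k l σ, IsSVD m k l σ ∧ U = colSpan k {j | (j : ℕ) < p} := by
  have hcols (k : Matrix (Fin d) (Fin d) ℝ) :
      { x : Euc d | ∃ i : Fin d, (i : ℕ) < p ∧
        x = (EuclideanSpace.equiv (Fin d) ℝ).symm (fun j => k j i) } =
        col k '' {j | (j : ℕ) < p} := by
    ext x
    simp [col, eq_comm]
  constructor
  · rintro ⟨k, l, σ, hk, hl, hσ, hσ0, hm, hU⟩
    exact ⟨k, l, σ, ⟨hk, hl, hσ, hσ0, hm⟩, by rw [hU, colSpan, hcols]⟩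
  · rintro ⟨k, l, σ, ⟨hk, hl, hσ, hσ0, hm⟩, hU⟩
    exact ⟨k, l, σ, hk, hl, hσ, hσ0, hm, by rw [hU, colSpan, hcols]⟩

lemma cartanAttractor_spec (hm : IsUnit m.det) (p : ℕ) :
    ∃ k l σ, IsSVD m k l σ ∧ cartanAttractor m p = colSpan k {j | (j : ℕ) < p} := by
  have hex : ∃ U, IsCartanAttractor m p U := by
    obtain ⟨k, l, σ, hs⟩ := exists_isSVD_of_isUnit_det hm
    exact ⟨_, isCartanAttractor_iff.mpr ⟨k, l, σ, hs, rfl⟩⟩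
  rw [cartanAttractor, dif_pos hex]
  exact isCartanAttractor_iff.mp hex.choose_spec

end CartanAttractor

theorem stmt0_general {d : ℕ} (p : ℕ) (hp1 : 1 ≤ p) (hpd : p ≤ d - 1)
    (g h : GL (Fin d) ℝ) :
    grassDist (cartanAttractor (mat (g * h)) p) (cartanAttractor (mat g) p) ≤
      opNorm (mat h) * opNorm (mat (h⁻¹)) *
        (sv (mat g) (p + 1) / sv (mat g) p) := by
  have hdet (x : GL (Fin d) ℝ) : IsUnit (mat x).det :=
    (Matrix.isUnit_iff_isUnit_det _).mp x.isUnit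
  have hmul : mat (g * h) = mat g * mat h := by simp [mat]
  have hsv : sv (mat g) p ≤ sv (mat (g * h)) p * opNorm (mat h⁻¹) := by
    simpa [hmul, Matrix.mul_assoc, mat] using sv_mul_le (mat (g * h)) (hdet h⁻¹) p
  obtain ⟨k, l, σ, hs, hU⟩ := cartanAttractor_spec (hdet g) p
  obtain ⟨k', l', σ', hs', hU'⟩ := cartanAttractor_spec (hdet (g * h)) p
  set i : Fin d := ⟨p - 1, by omega⟩
  have hip : (i : ℕ) + 1 = p := Nat.sub_add_cancel hp1
  set j : Fin d := ⟨p, by omega⟩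
  rw [← hip, hs.sv_succ, hs'.sv_succ] at hsv
  rw [hU, hU', ← hip, hs.sv_succ, hip, hs.sv_succ j]
  have hσi : 0 < σ i := hs.pos_of_isUnit_det (hdet g) i
  refine grassDist_le (colSpan_ne_bot hs.left_mem (show (i : ℕ) < p by omega))
    (mul_nonneg (mul_nonneg (opNorm_nonneg _) (opNorm_nonneg _))
      (div_nonneg (hs.nonneg j) hσi.le)) fun v hv hv1 => ?_
  obtain ⟨x, hx, hvx⟩ := hs.exists_norm_sub_le_of_mem_colSpan_mul (hmul ▸ hs') _
    (hs'.pos_of_isUnit_det (hdet (g * h)) i) (hs.nonneg j)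
    (fun j' hj' => hs'.antitone (Fin.le_def.mpr (by simp at hj'; omega)))
    (fun j' hj' => hs.antitone (Fin.le_def.mpr (by simp at hj'; omega))) hv
  refine ⟨x, hx, ?_⟩
  rw [hv1, mul_one] at hvx
  rw [← mul_div_assoc, le_div_iff₀ hσi]
  nlinarith [norm_nonneg (v - x), opNorm_nonneg (mat h), opNorm_nonneg (mat h⁻¹)]

/-- Lemma A.4 (1) of [BPS]. -/
theorem stmt0 {d : ℕ} (p : ℕ) (hp1 : 1 ≤ p) (hpd : p ≤ d - 1)
    (g h : GL (Fin d) ℝ)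
    (hg : HasGap (mat g) p) (hh : HasGap (mat h) p)
    (hgh : HasGap (mat (g * h)) p) :
    grassDist (cartanAttractor (mat (g * h)) p) (cartanAttractor (mat g) p) ≤
      opNorm (mat h) * opNorm (mat (h⁻¹)) *
        (sv (mat g) (p + 1) / sv (mat g) p) :=
  stmt0_general p hp1 hpd g h

end Paper
end
end

section
/- Let P, P₁, P₂ ⊆ ℝ^d be subspaces of the same dimension p with d(P₁,P) < 1 and d(P₂,P) < 1. Then d(P₁,P₂) ≤ ‖L_{P₁,P} − L_{P₂,P}‖ (operator norm). If moreover d(P₁,P) < 1/√2 and d(P₂,P) < 1/√2, then ‖L_{P₁,P} − L_{P₂,P}‖ ≤ 4·d(P₁,P₂). -/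
noncomputable section

open scoped Matrix RealInnerProductSpace
open Filter Topology

namespace Paper

section Helpers
open InnerProductGeometry
variable {d : ℕ}

lemma norm_mul_sin {v w : Euc d} (hv : v ≠ 0) (hw : w ≠ 0) :
    ‖v‖ * sinAngle v w = ‖v - (⟪w, v⟫ / ‖w‖ ^ 2) • w‖ := by
  have hw' : ‖w‖ ≠ 0 := norm_ne_zero_iff.2 hw
  have h := sin_angle_mul_norm_mul_norm v w
  have hA : ⟪v, v⟫ * ⟪w, w⟫ - ⟪v, w⟫ * ⟪v, w⟫
      = (‖v - (⟪w, v⟫ / ‖w‖ ^ 2) • w‖ * ‖w‖) ^ 2 := by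
    rw [mul_pow, norm_sub_sq_real, real_inner_smul_right, norm_smul,
      real_inner_self_eq_norm_sq, real_inner_self_eq_norm_sq, real_inner_comm w v]
    rw [mul_pow, Real.norm_eq_abs, sq_abs]
    field_simp; ring
  rw [hA, Real.sqrt_sq (by positivity)] at h
  unfold sinAngle
  have := mul_right_cancel₀ hw'
    (by linarith : Real.sin (angle v w) * ‖v‖ * ‖w‖ = ‖v - (⟪w, v⟫ / ‖w‖ ^ 2) • w‖ * ‖w‖)
  linarith

lemma sinAngle_nonneg (v w : Euc d) : 0 ≤ sinAngle v w :=
  Real.sin_nonneg_of_nonneg_of_le_pi (angle_nonneg v w) (angle_le_pi v w)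

lemma sinAngle_le_one (v w : Euc d) : sinAngle v w ≤ 1 := Real.sin_le_one _

/-- sin∠(v,w) ≤ ‖v-w‖/‖v‖. -/
lemma sinAngle_le_div {v w : Euc d} (hv : v ≠ 0) (hw : w ≠ 0) :
    sinAngle v w ≤ ‖v - w‖ / ‖v‖ := by
  have hv' : (0:ℝ) < ‖v‖ := norm_pos_iff.2 hv
  rw [le_div_iff₀ hv', mul_comm, norm_mul_sin hv hw]
  set c : ℝ := ⟪w, v⟫ / ‖w‖ ^ 2 with hc
  have horth : ⟪v - c • w, w⟫ = 0 := by
    rw [inner_sub_left, real_inner_smul_left, hc, real_inner_comm w v,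
      real_inner_self_eq_norm_sq]
    have hw2 : ‖w‖ ^ 2 ≠ 0 := pow_ne_zero _ (norm_ne_zero_iff.2 hw)
    field_simp
    ring
  have hdecomp : v - w = (v - c • w) + (c - 1) • w := by module
  have : ‖v - w‖ ^ 2 = ‖v - c • w‖ ^ 2 + ‖(c - 1) • w‖ ^ 2 := by
    rw [hdecomp, norm_add_sq_real, real_inner_smul_right, horth]; ring
  nlinarith [norm_nonneg (v - w), norm_nonneg (v - c • w), norm_nonneg ((c-1) • w)]

/-- lower bound: dist to subspace over ‖v‖ bounds every sin∠(v,w), w ∈ Q. -/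
lemma div_le_sinAngle (Q : Submodule ℝ (Euc d)) [Q.HasOrthogonalProjection]
    {v w : Euc d} (hv : v ≠ 0) (hw : w ≠ 0) (hwQ : w ∈ Q) :
    ‖v - (Submodule.orthogonalProjectionOnto Q v : Euc d)‖ / ‖v‖ ≤ sinAngle v w := by
  have hv' : (0:ℝ) < ‖v‖ := norm_pos_iff.2 hv
  rw [div_le_iff₀' hv', norm_mul_sin hv hw]
  -- minimality of orthogonal projection
  set y : Euc d := (⟪w, v⟫ / ‖w‖ ^ 2) • w with hy
  have hyQ : y ∈ Q := Q.smul_mem _ hwQ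
  have h1 : v - (Submodule.orthogonalProjectionOnto Q v : Euc d) ∈ Qᗮ :=
    Q.sub_starProjection_mem_orthogonal v
  have h2 : (Submodule.orthogonalProjectionOnto Q v : Euc d) - y ∈ Q :=
    Q.sub_mem (Submodule.orthogonalProjectionOnto Q v).2 hyQ
  have hdecomp : v - y = (v - (Submodule.orthogonalProjectionOnto Q v : Euc d)) +
      ((Submodule.orthogonalProjectionOnto Q v : Euc d) - y) := by abel
  have : ‖v - y‖ ^ 2 = ‖v - (Submodule.orthogonalProjectionOnto Q v : Euc d)‖ ^ 2 +
      ‖(Submodule.orthogonalProjectionOnto Q v : Euc d) - y‖ ^ 2 := by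
    rw [hdecomp, norm_add_sq_real,
      Submodule.inner_left_of_mem_orthogonal h2 h1]
    ring
  nlinarith [norm_nonneg (v - y), norm_nonneg (v - (Submodule.orthogonalProjectionOnto Q v : Euc d))]

lemma pyth (P : Submodule ℝ (Euc d)) {a b : Euc d} (ha : a ∈ P) (hb : b ∈ Pᗮ) :
    ‖a + b‖ ^ 2 = ‖a‖ ^ 2 + ‖b‖ ^ 2 := by
  rw [norm_add_sq_real, Submodule.inner_right_of_mem_orthogonal ha hb]; ring

lemma proj_add (P : Submodule ℝ (Euc d)) [P.HasOrthogonalProjection] {a b : Euc d}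
    (ha : a ∈ P) (hb : b ∈ Pᗮ) : (Submodule.orthogonalProjectionOnto P (a + b) : Euc d) = a := by
  rw [map_add, Submodule.coe_add, Submodule.coe_orthogonalProjectionOnto_apply, Submodule.starProjection_eq_self_iff.2 ha,
    Submodule.orthogonalProjectionOnto_apply_of_mem_orthogonal hb]
  simp

lemma grassDist_nonneg (P Q : Submodule ℝ (Euc d)) : 0 ≤ grassDist P Q := by
  apply Real.sSup_nonneg
  rintro r ⟨v, hv, hv0, rfl⟩
  exact Real.sInf_nonneg (by rintro s ⟨w, hw, hw0, rfl⟩; exact sinAngle_nonneg v w)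

lemma grassSet_bddAbove (P Q : Submodule ℝ (Euc d)) :
    BddAbove { r | ∃ v ∈ P, v ≠ 0 ∧
      r = sInf { s | ∃ w ∈ Q, w ≠ 0 ∧ s = sinAngle v w } } := by
  refine ⟨1, ?_⟩
  rintro r ⟨v, hv, hv0, rfl⟩
  rcases Set.eq_empty_or_nonempty { s | ∃ w ∈ Q, w ≠ 0 ∧ s = sinAngle v w } with h | ⟨s, hs⟩
  · rw [h, Real.sInf_empty]; exact zero_le_one
  · refine csInf_le_of_le ⟨0, ?_⟩ hs ?_
    · rintro t ⟨w, hw, hw0, rfl⟩; exact sinAngle_nonneg v w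
    · obtain ⟨w, hw, hw0, rfl⟩ := hs; exact sinAngle_le_one v w


lemma norm_le_pyth (P : Submodule ℝ (Euc d)) {a b : Euc d} (ha : a ∈ P) (hb : b ∈ Pᗮ) :
    ‖a‖ ≤ ‖a + b‖ ∧ ‖b‖ ≤ ‖a + b‖ := by
  have h := pyth P ha hb
  constructor <;> nlinarith [norm_nonneg a, norm_nonneg b, norm_nonneg (a + b)]

end Helpers

set_option maxHeartbeats 1000000 in
/-- Lemma A.11 of [BPS]: the graph chart of the Grassmannian is 1-Lipschitz, and
4-bi-Lipschitz near the base point. -/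
theorem stmt4 {d p : ℕ} (P P₁ P₂ : Submodule ℝ (Euc d))
    (hP : Module.finrank ℝ P = p) (h1 : Module.finrank ℝ P₁ = p)
    (h2 : Module.finrank ℝ P₂ = p)
    (hd1 : grassDist P₁ P < 1) (hd2 : grassDist P₂ P < 1)
    (L₁ L₂ : P →L[ℝ] Pᗮ)
    (hL₁ : (P₁ : Set (Euc d)) = { x | ∃ v : P, x = (v : Euc d) + (L₁ v : Euc d) })
    (hL₂ : (P₂ : Set (Euc d)) = { x | ∃ v : P, x = (v : Euc d) + (L₂ v : Euc d) }) :
    grassDist P₁ P₂ ≤ ‖L₁ - L₂‖ ∧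
    (grassDist P₁ P < 1 / Real.sqrt 2 → grassDist P₂ P < 1 / Real.sqrt 2 →
      ‖L₁ - L₂‖ ≤ 4 * grassDist P₁ P₂) := by
  classical
  have mem1 := Set.ext_iff.1 hL₁
  have mem2 := Set.ext_iff.1 hL₂
  have hx0gen : ∀ (L : P →L[ℝ] Pᗮ) (v : P), (v : Euc d) ≠ 0 →
      ((v : Euc d) + (L v : Euc d)) ≠ 0 := by
    intro L v hv h
    have hproj := proj_add P v.2 (L v).2
    rw [h, map_zero] at hproj
    exact hv (by simpa using hproj.symm)
  constructor
  · -- grassDist P₁ P₂ ≤ ‖L₁ - L₂‖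
    rw [show grassDist P₁ P₂ = sSup { r | ∃ v ∈ P₁, v ≠ 0 ∧
      r = sInf { s | ∃ w ∈ P₂, w ≠ 0 ∧ s = sinAngle v w } } from rfl]
    have hN : (0:ℝ) ≤ ‖L₁ - L₂‖ := ContinuousLinearMap.opNorm_nonneg _
    apply Real.sSup_le _ hN
    rintro r ⟨x, hxP₁, hx0, rfl⟩
    obtain ⟨v, rfl⟩ := (mem1 x).1 hxP₁
    have hv' : (v : Euc d) ≠ 0 := by
      intro h
      apply hx0
      have hv0 : v = 0 := Subtype.ext h
      simp [hv0]
    set x₂ : Euc d := ↑v + ↑(L₂ v) with hx₂def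
    have hx₂P₂ : x₂ ∈ P₂ := (mem2 x₂).2 ⟨v, rfl⟩
    have hx₂0 : x₂ ≠ 0 := hx0gen L₂ v hv'
    refine le_trans (csInf_le ⟨0, ?_⟩ ⟨x₂, hx₂P₂, hx₂0, rfl⟩) ?_
    · rintro t ⟨w, hw, hw0, rfl⟩; exact sinAngle_nonneg _ _
    refine le_trans (sinAngle_le_div hx0 hx₂0) ?_
    have hdiff : (↑v + ↑(L₁ v) : Euc d) - x₂ = ↑(L₁ v - L₂ v) := by
      rw [hx₂def, Submodule.coe_sub]; abel
    have hop : ‖(↑(L₁ v - L₂ v) : Euc d)‖ ≤ ‖L₁ - L₂‖ * ‖(v : Euc d)‖ := by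
      rw [← Submodule.coe_norm, ← ContinuousLinearMap.sub_apply, ← Submodule.coe_norm (x := v)]
      exact (L₁ - L₂).le_opNorm v
    have hvle : ‖(v : Euc d)‖ ≤ ‖(↑v + ↑(L₁ v) : Euc d)‖ :=
      (norm_le_pyth P v.2 (L₁ v).2).1
    rw [div_le_iff₀ (norm_pos_iff.2 hx0), hdiff]
    calc ‖(↑(L₁ v - L₂ v) : Euc d)‖ ≤ ‖L₁ - L₂‖ * ‖(v : Euc d)‖ := hop
      _ ≤ ‖L₁ - L₂‖ * ‖(↑v + ↑(L₁ v) : Euc d)‖ :=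
        mul_le_mul_of_nonneg_left hvle (ContinuousLinearMap.opNorm_nonneg _)
  · -- reverse inequality
    intro hs1 hs2
    by_cases hp0 : p = 0
    · have hPbot : P = ⊥ := Submodule.finrank_eq_zero.1 (by rw [hP, hp0])
      apply ContinuousLinearMap.opNorm_le_bound _
        (mul_nonneg (by norm_num) (grassDist_nonneg P₁ P₂))
      intro x
      have hx : x = 0 := by
        apply Subtype.ext
        have hxm : (x : Euc d) ∈ (⊥ : Submodule ℝ (Euc d)) := by
          rw [← hPbot]; exact x.2
        simpa using hxm
      rw [hx]
      simp
    have hPne : ∃ w : Euc d, w ∈ P ∧ w ≠ 0 := by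
      apply Submodule.exists_mem_ne_zero_of_ne_bot
      intro h
      rw [h] at hP
      simp at hP
      exact hp0 hP.symm
    have hP₂ne : ∃ w : Euc d, w ∈ P₂ ∧ w ≠ 0 := by
      apply Submodule.exists_mem_ne_zero_of_ne_bot
      intro h
      rw [h] at h2
      simp at h2
      exact hp0 h2.symm
    have hsqrt2 : (0:ℝ) < Real.sqrt 2 := Real.sqrt_pos.2 (by norm_num)
    have hsq2 : Real.sqrt 2 ^ 2 = 2 := Real.sq_sqrt (by norm_num)
    -- key pointwise bound on graph maps with small distance
    have hLb : ∀ (Q : Submodule ℝ (Euc d)) (L : P →L[ℝ] Pᗮ),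
        (Q : Set (Euc d)) = { x | ∃ v : P, x = (v : Euc d) + (L v : Euc d) } →
        grassDist Q P < 1 / Real.sqrt 2 → ∀ u : P, ‖(L u : Euc d)‖ ≤ ‖(u : Euc d)‖ := by
      intro Q L hL hs u
      by_cases hu : (u : Euc d) = 0
      · have : u = 0 := Subtype.ext hu
        simp [this]
      set x : Euc d := ↑u + ↑(L u) with hxdef
      have hxQ : x ∈ Q := (Set.ext_iff.1 hL x).2 ⟨u, rfl⟩
      have hproj : (Submodule.orthogonalProjectionOnto P x : Euc d) = ↑u := proj_add P u.2 (L u).2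
      have hx0 : x ≠ 0 := hx0gen L u hu
      have hq : ‖x - (Submodule.orthogonalProjectionOnto P x : Euc d)‖ / ‖x‖ ≤
          sInf { s | ∃ w ∈ P, w ≠ 0 ∧ s = sinAngle x w } := by
        apply le_csInf
        · obtain ⟨w, hwP, hw0⟩ := hPne
          exact ⟨_, w, hwP, hw0, rfl⟩
        · rintro s ⟨w, hwP, hw0, rfl⟩
          exact div_le_sinAngle P hx0 hw0 hwP
      have hmem : sInf { s | ∃ w ∈ P, w ≠ 0 ∧ s = sinAngle x w } ≤ grassDist Q P :=
        le_csSup (grassSet_bddAbove Q P) ⟨x, hxQ, hx0, rfl⟩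
      rw [hproj] at hq
      have hsub : x - (u : Euc d) = ↑(L u) := by rw [hxdef]; abel
      rw [hsub] at hq
      have hlt : ‖(L u : Euc d)‖ / ‖x‖ < 1 / Real.sqrt 2 :=
        lt_of_le_of_lt (hq.trans hmem) hs
      have hxpos : (0:ℝ) < ‖x‖ := norm_pos_iff.2 hx0
      have hlt2 : Real.sqrt 2 * ‖(L u : Euc d)‖ < ‖x‖ := by
        rw [div_lt_div_iff₀ hxpos hsqrt2] at hlt
        linarith
      have hpy := pyth P u.2 (L u).2
      rw [← hxdef] at hpy
      have hsq : 2 * ‖(L u : Euc d)‖ ^ 2 < ‖x‖ ^ 2 := by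
        have hms := mul_self_lt_mul_self (by positivity) hlt2
        nlinarith [hms, hsq2]
      nlinarith [norm_nonneg (L u : Euc d), norm_nonneg (u : Euc d), hpy, hsq]
    have hL2b := hLb P₂ L₂ hL₂ hs2
    have hL1b := hLb P₁ L₁ hL₁ hs1
    have hD0 : 0 ≤ grassDist P₁ P₂ := grassDist_nonneg P₁ P₂
    apply ContinuousLinearMap.opNorm_le_bound _ (mul_nonneg (by norm_num) hD0)
    intro v
    by_cases hv : (v : Euc d) = 0
    · have : v = 0 := Subtype.ext hv
      simp [this]
    set x : Euc d := ↑v + ↑(L₁ v) with hxdef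
    have hxP₁ : x ∈ P₁ := (mem1 x).2 ⟨v, rfl⟩
    have hx0 : x ≠ 0 := hx0gen L₁ v hv
    set y : Euc d := (Submodule.orthogonalProjectionOnto P₂ x : Euc d) with hydef
    have hyP₂ : y ∈ P₂ := (Submodule.orthogonalProjectionOnto P₂ x).2
    obtain ⟨w, hw⟩ := (mem2 y).1 hyP₂
    have hq1 : ‖x - y‖ / ‖x‖ ≤ sInf { s | ∃ w ∈ P₂, w ≠ 0 ∧ s = sinAngle x w } := by
      apply le_csInf
      · obtain ⟨w', hwP, hw0⟩ := hP₂ne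
        exact ⟨_, w', hwP, hw0, rfl⟩
      · rintro s ⟨w', hwP, hw0, rfl⟩
        exact div_le_sinAngle P₂ hx0 hw0 hwP
    have hq2 : sInf { s | ∃ w ∈ P₂, w ≠ 0 ∧ s = sinAngle x w } ≤ grassDist P₁ P₂ :=
      le_csSup (grassSet_bddAbove P₁ P₂) ⟨x, hxP₁, hx0, rfl⟩
    have hq : ‖x - y‖ / ‖x‖ ≤ grassDist P₁ P₂ := hq1.trans hq2
    have hxpos : (0:ℝ) < ‖x‖ := norm_pos_iff.2 hx0
    have hxy : ‖x - y‖ ≤ grassDist P₁ P₂ * ‖x‖ := by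
      rw [div_le_iff₀ hxpos] at hq
      exact hq
    have hdecomp : x - y = ((v : Euc d) - ↑w) + ((L₁ v : Euc d) - ↑(L₂ w)) := by
      rw [hxdef, hw]; abel
    have hsplit := norm_le_pyth P (P.sub_mem v.2 w.2) (Pᗮ.sub_mem (L₁ v).2 (L₂ w).2)
    rw [← hdecomp] at hsplit
    -- x norm bound
    have hpy := pyth P v.2 (L₁ v).2
    rw [← hxdef] at hpy
    have hL1v := hL1b v
    have hxle : ‖x‖ ≤ Real.sqrt 2 * ‖(v : Euc d)‖ := by
      have h1 : ‖x‖ ^ 2 ≤ (Real.sqrt 2 * ‖(v : Euc d)‖) ^ 2 := by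
        rw [mul_pow, hsq2]
        nlinarith [norm_nonneg (L₁ v : Euc d), norm_nonneg (v : Euc d)]
      have h2 := Real.sqrt_le_sqrt h1
      rwa [Real.sqrt_sq (norm_nonneg x), Real.sqrt_sq (by positivity)] at h2
    -- triangle
    have htri : ‖((L₁ v : Euc d)) - ↑(L₂ v)‖ ≤
        ‖((L₁ v : Euc d)) - ↑(L₂ w)‖ + ‖((L₂ w : Euc d)) - ↑(L₂ v)‖ := by
      have := norm_add_le ((L₁ v : Euc d) - ↑(L₂ w)) ((L₂ w : Euc d) - ↑(L₂ v))
      simpa using this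
    have hLwv : ‖((L₂ w : Euc d)) - ↑(L₂ v)‖ ≤ ‖x - y‖ := by
      have h1 : ((L₂ w : Euc d)) - ↑(L₂ v) = ↑(L₂ (w - v)) := by
        rw [map_sub, Submodule.coe_sub]
      rw [h1]
      refine le_trans (hL2b (w - v)) ?_
      rw [Submodule.coe_sub]
      calc ‖(w : Euc d) - ↑v‖ = ‖(v : Euc d) - ↑w‖ := norm_sub_rev _ _
        _ ≤ ‖x - y‖ := hsplit.1
    have hgoal : ‖((L₁ v : Euc d)) - ↑(L₂ v)‖ ≤ 2 * ‖x - y‖ := by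
      linarith [hsplit.2]
    have hfinal : ‖((L₁ v : Euc d)) - ↑(L₂ v)‖ ≤ 4 * grassDist P₁ P₂ * ‖(v : Euc d)‖ := by
      have h2xy : 2 * ‖x - y‖ ≤ 2 * (grassDist P₁ P₂ * ‖x‖) := by linarith
      have hsle : Real.sqrt 2 ≤ 2 := by nlinarith [Real.sqrt_nonneg 2]
      have : grassDist P₁ P₂ * ‖x‖ ≤ grassDist P₁ P₂ * (Real.sqrt 2 * ‖(v : Euc d)‖) :=
        mul_le_mul_of_nonneg_left hxle hD0
      nlinarith [norm_nonneg (v : Euc d), mul_nonneg hD0 (norm_nonneg (v : Euc d))]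
    calc ‖(L₁ - L₂) v‖ = ‖((L₁ v : Euc d)) - ↑(L₂ v)‖ := by
          rw [ContinuousLinearMap.sub_apply, ← Submodule.coe_sub, ← Submodule.coe_norm]
      _ ≤ 4 * grassDist P₁ P₂ * ‖(v : Euc d)‖ := hfinal
      _ = 4 * grassDist P₁ P₂ * ‖v‖ := by rw [← Submodule.coe_norm]


end Paper
end
end
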